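/- arXiv:2110.15611 — 2 statements merged into one kernel-verified Lean document; each statement's English description precedes it below -/
import Mathlib

section
/- Assume the inverse inequality ‖∇φ_h‖_{L²} ≤ C h⁻¹ ‖φ_h‖_{L²} holds for all φ_h in the finite element space V_h, and 0 < α ≤ 𝒞h. If V ∈ V_h and U ∈ V_h is the discrete differential filter of V (i.e. α²(∇U, ∇φ) + (U, φ) = (V, φ) for all φ ∈ V_h), then ‖V‖_{L²} ≤ 𝒞₁ ‖U‖_α, where ‖U‖_α² = ‖U‖²_{L²} + α²‖∇U‖²_{L²} and 𝒞₁ depends only on 𝒞 and C. -/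
/-!
Testing the filter equation with `φ = V` gives
`‖V‖² = α² (∇U, ∇V) + (U, V) ≤ α‖∇U‖ · α‖∇V‖ + ‖U‖ ‖V‖`.
The inverse inequality together with `α ≤ 𝒞h` turns `α‖∇V‖` into at most `𝒞C‖V‖`, while
both `α‖∇U‖` and `‖U‖` are bounded by `‖U‖_α`; dividing by `‖V‖` gives `𝒞₁ = 𝒞C + 1`.
-/

open scoped InnerProductSpace

namespace LinearMap.BilinForm

variable {M : Type*} [AddCommGroup M] [Module ℝ M]

lemma apply_le_sqrt_mul_sqrt (B : LinearMap.BilinForm ℝ M) (hp : ∀ x, 0 ≤ B x x)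
    (hB : LinearMap.IsSymm B) (x y : M) : B x y ≤ √(B x x) * √(B y y) :=
  calc B x y ≤ |B x y| := le_abs_self _
    _ ≤ √(B x x * B y y) := Real.abs_le_sqrt (apply_sq_le_of_symm B hp hB x y)
    _ = √(B x x) * √(B y y) := Real.sqrt_mul (hp x) _

end LinearMap.BilinForm

lemma mul_sqrt_le_of_le_div_sq_mul_sq {α h 𝒞 C b n : ℝ} (hα : 0 ≤ α) (hh : 0 < h)
    (hC : 0 ≤ C) (hn : 0 ≤ n) (hαh : α ≤ 𝒞 * h) (hb : b ≤ (C / h) ^ 2 * n ^ 2) :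
    α * √b ≤ 𝒞 * C * n :=
  calc α * √b ≤ α * (C / h * n) := by
        gcongr
        rw [← Real.sqrt_sq (by positivity : 0 ≤ C / h * n), mul_pow]
        exact Real.sqrt_le_sqrt hb
    _ ≤ 𝒞 * h * (C / h * n) := by gcongr
    _ = 𝒞 * C * n := by field_simp

lemma le_of_sq_le_mul_self {a b : ℝ} (hb : 0 ≤ b) (h : a ^ 2 ≤ b * a) : a ≤ b := by
  nlinarith

lemma norm_le_mul_sqrt_of_norm_sq_eq {E : Type*} [NormedAddCommGroup E] [InnerProductSpace ℝ E]
    (B : LinearMap.BilinForm ℝ E) (hp : ∀ x, 0 ≤ B x x)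
    (hB : LinearMap.IsSymm B) {α K : ℝ} (hα : 0 ≤ α) (hK : 0 ≤ K) {U V : E}
    (hVV : ‖V‖ ^ 2 = α ^ 2 * B U V + ⟪U, V⟫_ℝ) (hinv : α * √(B V V) ≤ K * ‖V‖) :
    ‖V‖ ≤ (K + 1) * √(‖U‖ ^ 2 + α ^ 2 * B U U) := by
  set N := √(‖U‖ ^ 2 + α ^ 2 * B U U)
  have hUN : ‖U‖ ≤ N := Real.le_sqrt_of_sq_le (by nlinarith [hp U])
  have hgradUN : α * √(B U U) ≤ N := Real.le_sqrt_of_sq_le (by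
    rw [mul_pow, Real.sq_sqrt (hp U)]; nlinarith [sq_nonneg ‖U‖])
  have hgrad : α ^ 2 * B U V ≤ N * (K * ‖V‖) :=
    calc α ^ 2 * B U V ≤ α ^ 2 * (√(B U U) * √(B V V)) := by
          gcongr; exact LinearMap.BilinForm.apply_le_sqrt_mul_sqrt B hp hB U V
      _ = (α * √(B U U)) * (α * √(B V V)) := by ring
      _ ≤ N * (K * ‖V‖) := by gcongr
  have hL2 : ⟪U, V⟫_ℝ ≤ N * ‖V‖ :=
    (real_inner_le_norm U V).trans (by gcongr)
  refine le_of_sq_le_mul_self (by positivity) ?_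
  linarith

/-- Under the inverse inequality `‖∇φ_h‖ ≤ C h⁻¹‖φ_h‖` on `V_h` and `0 < α ≤ 𝒞h`,
the discrete filter `U` of `V ∈ V_h` satisfies `‖V‖_{L²} ≤ 𝒞₁‖U‖_α` with `𝒞₁`
depending only on `𝒞` and `C`. Abstract Hilbert space formulation: `E` is `L²`,
`Bgrad x y = (∇x, ∇y)` is the gradient inner product (so `Bgrad x x = ‖∇x‖²`). -/
theorem stmt_12 (𝒞 C : ℝ) (h𝒞 : 0 < 𝒞) (hC : 0 < C) :
    ∃ C₁ : ℝ, 0 < C₁ ∧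
      ∀ (E : Type) (_ : NormedAddCommGroup E) (_ : InnerProductSpace ℝ E)
        (Vh : Submodule ℝ E)
        (Bgrad : E →ₗ[ℝ] E →ₗ[ℝ] ℝ),
        (∀ x y, Bgrad x y = Bgrad y x) →
        (∀ x, 0 ≤ Bgrad x x) →
        ∀ (α h : ℝ), 0 < h → 0 < α → α ≤ 𝒞 * h →
        -- inverse inequality on `V_h`
        (∀ φ ∈ Vh, Bgrad φ φ ≤ (C / h) ^ 2 * ‖φ‖ ^ 2) →
        ∀ (V U : E), V ∈ Vh → U ∈ Vh →
        -- `U` is the discrete differential filter of `V`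
        (∀ φ ∈ Vh, α ^ 2 * Bgrad U φ + ⟪U, φ⟫_ℝ = ⟪V, φ⟫_ℝ) →
        ‖V‖ ≤ C₁ * Real.sqrt (‖U‖ ^ 2 + α ^ 2 * Bgrad U U) := by
  refine ⟨𝒞 * C + 1, by positivity, ?_⟩
  intro E _ _ Vh B hs hp α h hh hα hαh hinv V U hV _ hfilter
  have hVV : ‖V‖ ^ 2 = α ^ 2 * B U V + ⟪U, V⟫_ℝ := by
    rw [hfilter V hV, real_inner_self_eq_norm_sq]
  exact norm_le_mul_sqrt_of_norm_sq_eq B hp ⟨hs⟩ hα.le (by positivity) hVV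
    (mul_sqrt_le_of_le_div_sq_mul_sq hα.le hh hC.le (norm_nonneg V) hαh (hinv V hV))
end

section
/- Let (φ_h)_{h>0} be a sequence in H¹₀(D)ᵈ-conforming finite element spaces V_h such that ‖∇φ_h‖²_{L²} + α²‖Δʰφ_h‖²_{L²} ≤ C uniformly in h (α > 0 fixed). Then, along a subsequence, φ_h converges weakly in H¹₀ to some φ ∈ H² ∩ H¹₀, Δʰφ_h ⇀ Δφ weakly in L², and moreover φ_h → φ strongly in H¹₀. -/
/-!
Bounded sequences in a Hilbert space have weakly convergent subsequences: by sequential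
Banach–Alaoglu on the (separable) closed span of the sequence, identified with its dual by
Riesz. Passing to the limit in `(Δʰφ_h, ι w_h) = -(φ_h, w_h)` along `w_h → w` identifies the
weak limit `z` of `Δʰφ_h` as `Δφ`. Compactness of `ι` upgrades `ι φ_h ⇀ ι φ` to strong
convergence, so `‖φ_h‖² = -(Δʰφ_h, ι φ_h) → -(z, ι φ) = ‖φ‖²`, and weak convergence together
with convergence of norms is strong convergence.
-/

open Filter Topology
open scoped InnerProductSpace

section WeakConvergence

variable {ι E : Type*} [NormedAddCommGroup E] [InnerProductSpace ℝ E]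

def WeakTendsto (u : ι → E) (l : Filter ι) (x : E) : Prop :=
  ∀ y : E, Tendsto (fun i => ⟪u i, y⟫_ℝ) l (𝓝 ⟪x, y⟫_ℝ)

namespace WeakTendsto

variable {l : Filter ι} {u : ι → E} {x : E}

theorem comp {κ : Type*} {l' : Filter κ} {g : κ → ι} (hu : WeakTendsto u l x)
    (hg : Tendsto g l' l) : WeakTendsto (u ∘ g) l' x :=
  fun y => (hu y).comp hg

theorem map [CompleteSpace E] {F : Type*} [NormedAddCommGroup F] [InnerProductSpace ℝ F]
    [CompleteSpace F] (T : E →L[ℝ] F) (hu : WeakTendsto u l x) :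
    WeakTendsto (T ∘ u) l (T x) := fun y => by
  simpa only [Function.comp_apply, ContinuousLinearMap.adjoint_inner_right] using
    hu (ContinuousLinearMap.adjoint T y)

theorem eq_of_tendsto [l.NeBot] {y : E} (hu : WeakTendsto u l x) (hy : Tendsto u l (𝓝 y)) :
    y = x :=
  ext_inner_right ℝ fun v => tendsto_nhds_unique (hy.inner tendsto_const_nhds) (hu v)

theorem tendsto_inner {M : ℝ} {v : ι → E} {y : E} (hu : WeakTendsto u l x)
    (hM : ∀ i, ‖u i‖ ≤ M) (hv : Tendsto v l (𝓝 y)) :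
    Tendsto (fun i => ⟪u i, v i⟫_ℝ) l (𝓝 ⟪x, y⟫_ℝ) := by
  have hsmall : Tendsto (fun i => ⟪u i, v i - y⟫_ℝ) l (𝓝 0) := by
    refine squeeze_zero_norm (fun i => (norm_inner_le_norm _ _).trans
      (mul_le_mul_of_nonneg_right (hM i) (norm_nonneg _))) ?_
    simpa using (tendsto_iff_norm_sub_tendsto_zero.mp hv).const_mul M
  simpa [inner_sub_right] using hsmall.add (hu y)

theorem tendsto_of_tendsto_inner_self (hu : WeakTendsto u l x)
    (hself : Tendsto (fun i => ⟪u i, u i⟫_ℝ) l (𝓝 ⟪x, x⟫_ℝ)) : Tendsto u l (𝓝 x) := by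
  have hsq : Tendsto (fun i => ⟪u i - x, u i - x⟫_ℝ) l (𝓝 0) := by
    have h := (hself.sub ((hu x).const_mul 2)).add_const ⟪x, x⟫_ℝ
    rw [show ⟪x, x⟫_ℝ - 2 * ⟪x, x⟫_ℝ + ⟪x, x⟫_ℝ = 0 by ring] at h
    refine h.congr fun i => ?_
    rw [inner_sub_left, inner_sub_right, inner_sub_right, real_inner_comm x (u i)]
    ring
  rw [tendsto_iff_norm_sub_tendsto_zero]
  simpa [← norm_eq_sqrt_real_inner] using hsq.sqrt

end WeakTendsto

theorem exists_strictMono_weakTendsto_of_bounded [CompleteSpace E] {u : ℕ → E} {M : ℝ}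
    (hu : ∀ n, ‖u n‖ ≤ M) : ∃ g : ℕ → ℕ, StrictMono g ∧ ∃ x, WeakTendsto (u ∘ g) atTop x := by
  set K := (Submodule.span ℝ (Set.range u)).topologicalClosure
  have hK : ∀ n, u n ∈ K := fun n =>
    Submodule.le_topologicalClosure _ (Submodule.subset_span ⟨n, rfl⟩)
  have : TopologicalSpace.SeparableSpace K :=
    (Set.countable_range u).isSeparable.span.closure.separableSpace
  let v : ℕ → WeakDual ℝ K := fun n =>
    StrongDual.toWeakDual (InnerProductSpace.toDual ℝ K ⟨u n, hK n⟩)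
  have hv : ∀ n, v n ∈ WeakDual.toStrongDual ⁻¹' Metric.closedBall 0 M := fun n => by
    rw [Set.mem_preimage, Metric.mem_closedBall]
    exact (dist_zero_right _).trans_le
      (((InnerProductSpace.toDual ℝ K).norm_map _).trans_le (hu n))
  obtain ⟨F, -, g, hg, hvF⟩ := WeakDual.isSeqCompact_closedBall ℝ K 0 M hv
  set x : K := (InnerProductSpace.toDual ℝ K).symm F.toStrongDual
  refine ⟨g, hg, x, fun y => ?_⟩
  have hv_apply : ∀ n, v n (K.orthogonalProjectionOnto y) = ⟪u n, y⟫_ℝ := fun n =>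
    K.inner_orthogonalProjectionOnto_eq_of_mem_left ⟨u n, hK n⟩ y
  have hF_apply : F (K.orthogonalProjectionOnto y) = ⟪(x : E), y⟫_ℝ := by
    rw [← K.inner_orthogonalProjectionOnto_eq_of_mem_left, InnerProductSpace.toDual_symm_apply]
    rfl
  rw [← hF_apply]
  simpa only [Function.comp_def, hv_apply] using
    ((WeakDual.eval_continuous (K.orthogonalProjectionOnto y)).tendsto F).comp hvF

end WeakConvergence

theorem stmt_16_general {H1 L2 : Type*}
    [NormedAddCommGroup H1] [InnerProductSpace ℝ H1] [CompleteSpace H1]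
    [NormedAddCommGroup L2] [InnerProductSpace ℝ L2] [CompleteSpace L2]
    (ι : H1 →L[ℝ] L2)
    -- compactness of the embedding `H¹₀ ↪ L²`
    (hcompact : ∀ (ψ : ℕ → H1) (C : ℝ), (∀ j, ‖ψ j‖ ≤ C) →
      ∃ g : ℕ → ℕ, StrictMono g ∧ ∃ y : L2,
        Tendsto (fun j => ι (ψ (g j))) atTop (nhds y))
    (h : ℕ → ℝ)
    (Vh : ℝ → Submodule ℝ H1)
    (α : ℝ) (hα : 0 < α)
    (φseq : ℕ → H1) (hφmem : ∀ j, φseq j ∈ Vh (h j))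
    (Dseq : ℕ → L2)
    -- `Dseq j` is the discrete Laplacian `Δʰφ_{h j}`
    (hD : ∀ j, ∀ w ∈ Vh (h j), ⟪Dseq j, ι w⟫_ℝ = -⟪φseq j, w⟫_ℝ)
    -- uniform bound `‖∇φ_h‖² + α²‖Δʰφ_h‖² ≤ C`
    (C : ℝ) (hbound : ∀ j, ‖φseq j‖ ^ 2 + α ^ 2 * ‖Dseq j‖ ^ 2 ≤ C)
    -- approximation property of the finite element spaces
    (hdense : ∀ w : H1, ∃ wh : ℕ → H1, (∀ j, wh j ∈ Vh (h j)) ∧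
      Tendsto (fun j => ‖wh j - w‖) atTop (nhds 0)) :
    ∃ (g : ℕ → ℕ) (φ : H1) (z : L2), StrictMono g ∧
      (∀ w : H1, Tendsto (fun j => ⟪φseq (g j), w⟫_ℝ) atTop (nhds ⟪φ, w⟫_ℝ)) ∧
      (∀ y : L2, Tendsto (fun j => ⟪Dseq (g j), y⟫_ℝ) atTop (nhds ⟪z, y⟫_ℝ)) ∧
      (∀ w : H1, ⟪z, ι w⟫_ℝ = -⟪φ, w⟫_ℝ) ∧
      Tendsto (fun j => ‖φseq (g j) - φ‖) atTop (nhds 0) := by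
  have hφb : ∀ j, ‖φseq j‖ ≤ √C := fun j =>
    Real.le_sqrt_of_sq_le (by nlinarith [hbound j, sq_nonneg (α * ‖Dseq j‖)])
  have hDb : ∀ j, ‖Dseq j‖ ≤ √C / α := fun j => by
    rw [le_div_iff₀ hα, mul_comm]
    exact Real.le_sqrt_of_sq_le (by nlinarith [hbound j, sq_nonneg ‖φseq j‖])
  obtain ⟨g₀, hg₀, y, hy⟩ := hcompact φseq √C hφb
  obtain ⟨g₁, hg₁, φ, hφ⟩ := exists_strictMono_weakTendsto_of_bounded fun j => hφb (g₀ j)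
  obtain ⟨g₂, hg₂, z, hz⟩ := exists_strictMono_weakTendsto_of_bounded fun j => hDb (g₀ (g₁ j))
  set g := g₀ ∘ g₁ ∘ g₂
  have hg : StrictMono g := hg₀.comp (hg₁.comp hg₂)
  have hφg : WeakTendsto (φseq ∘ g) atTop φ := hφ.comp hg₂.tendsto_atTop
  have hzg : WeakTendsto (Dseq ∘ g) atTop z := hz
  have hιφg : Tendsto (ι ∘ φseq ∘ g) atTop (𝓝 (ι φ)) := by
    have hyg := hy.comp (hg₁.comp hg₂).tendsto_atTop
    rwa [← (hφg.map ι).eq_of_tendsto hyg]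
  have hlimit : ∀ w : H1, ⟪z, ι w⟫_ℝ = -⟪φ, w⟫_ℝ := by
    intro w
    obtain ⟨wh, hwh, hwhw⟩ := hdense w
    have hw : Tendsto (wh ∘ g) atTop (𝓝 w) :=
      (tendsto_iff_norm_sub_tendsto_zero.mpr hwhw).comp hg.tendsto_atTop
    refine tendsto_nhds_unique (hzg.tendsto_inner (fun j => hDb _) ((ι.continuous.tendsto w).comp hw)) ?_
    simpa only [Function.comp_apply, hD _ _ (hwh _)] using
      (hφg.tendsto_inner (fun j => hφb _) hw).neg
  have hself : Tendsto (fun j => ⟪φseq (g j), φseq (g j)⟫_ℝ) atTop (𝓝 ⟪φ, φ⟫_ℝ) := by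
    have h := (hzg.tendsto_inner (fun j => hDb _) hιφg).neg
    simpa only [Function.comp_apply, hD _ _ (hφmem _), hlimit, neg_neg] using h
  exact ⟨g, φ, z, hg, hφg, hzg, hlimit,
    tendsto_iff_norm_sub_tendsto_zero.mp (hφg.tendsto_of_tendsto_inner_self hself)⟩

/-- Discrete elliptic compactness: if `(φ_h)` satisfies
`‖∇φ_h‖² + α²‖Δʰφ_h‖² ≤ C` uniformly, then along a subsequence `φ_h ⇀ φ`
weakly in `H¹₀`, `Δʰφ_h ⇀ Δφ` weakly in `L²` (so `φ ∈ H² ∩ H¹₀`), and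
`φ_h → φ` strongly in `H¹₀`.

Abstract formulation: `H1` is the space `H¹₀(D)ᵈ` with the gradient inner
product, `L2` the space `L²(D)ᵈ`, `ι : H1 → L2` the (compact) embedding,
`Vh s ⊆ H1` the finite element spaces, `Dseq j = Δʰφ_{h j}` the discrete
Laplacians characterized by `(Δʰz, w)_{L²} = −(∇z, ∇w)` for `w ∈ V_h`; the
density hypothesis encodes the approximation property of the `L²`-projections,
and the limit identity `(z, ιw)_{L²} = −(φ, w)_{H¹}` expresses `z = Δφ` with
`φ ∈ H² ∩ H¹₀`. -/
theorem stmt_16 {H1 L2 : Type*}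
    [NormedAddCommGroup H1] [InnerProductSpace ℝ H1] [CompleteSpace H1]
    [NormedAddCommGroup L2] [InnerProductSpace ℝ L2] [CompleteSpace L2]
    (ι : H1 →L[ℝ] L2) (hι : Function.Injective ι)
    -- compactness of the embedding `H¹₀ ↪ L²`
    (hcompact : ∀ (ψ : ℕ → H1) (C : ℝ), (∀ j, ‖ψ j‖ ≤ C) →
      ∃ g : ℕ → ℕ, StrictMono g ∧ ∃ y : L2,
        Tendsto (fun j => ι (ψ (g j))) atTop (nhds y))
    (h : ℕ → ℝ) (hh : ∀ j, 0 < h j) (hh0 : Tendsto h atTop (nhds 0))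
    (Vh : ℝ → Submodule ℝ H1)
    (α : ℝ) (hα : 0 < α)
    (φseq : ℕ → H1) (hφmem : ∀ j, φseq j ∈ Vh (h j))
    (Dseq : ℕ → L2)
    -- `Dseq j` is the discrete Laplacian `Δʰφ_{h j}`
    (hD : ∀ j, ∀ w ∈ Vh (h j), ⟪Dseq j, ι w⟫_ℝ = -⟪φseq j, w⟫_ℝ)
    -- uniform bound `‖∇φ_h‖² + α²‖Δʰφ_h‖² ≤ C`
    (C : ℝ) (hbound : ∀ j, ‖φseq j‖ ^ 2 + α ^ 2 * ‖Dseq j‖ ^ 2 ≤ C)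
    -- approximation property of the finite element spaces
    (hdense : ∀ w : H1, ∃ wh : ℕ → H1, (∀ j, wh j ∈ Vh (h j)) ∧
      Tendsto (fun j => ‖wh j - w‖) atTop (nhds 0)) :
    ∃ (g : ℕ → ℕ) (φ : H1) (z : L2), StrictMono g ∧
      (∀ w : H1, Tendsto (fun j => ⟪φseq (g j), w⟫_ℝ) atTop (nhds ⟪φ, w⟫_ℝ)) ∧
      (∀ y : L2, Tendsto (fun j => ⟪Dseq (g j), y⟫_ℝ) atTop (nhds ⟪z, y⟫_ℝ)) ∧
      (∀ w : H1, ⟪z, ι w⟫_ℝ = -⟪φ, w⟫_ℝ) ∧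
      Tendsto (fun j => ‖φseq (g j) - φ‖) atTop (nhds 0) :=
  stmt_16_general ι hcompact h Vh α hα φseq hφmem Dseq hD C hbound hdense
end
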